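/- arXiv:2305.03432 — 2 statements merged into one kernel-verified Lean document; each statement's English description precedes it below -/
import Mathlib

section
/- Let (ρ_b, ρ_g, ι) be an effect-oriented rule and t : G ⟹_{ρ_c, m_c} H an effect-oriented transformation via one of its induced rules ρ_c. Let x ∈ R_c \ (K_c ∪ R_b) represent one of the potential creations of (ρ_b, ρ_g, ι) that has been performed by t, let K_b^+ be the extension of K_b with x (provided this is defined as a graph, i.e., x is a node, or x is an edge whose endpoints lie in K_b), and let ι^+ : K_b → K_b^+ be the corresponding inclusion. Then either (1) (alternative action) for every injective morphism m_b^+ : K_b^+ → G with m_b^+ ∘ ι^+ = m_c ∘ l_c ∘ ι_K^{m}, the element m_b^+(x) of G has a pre-image from L_c under m_c, or (2) (non-existence of match) no injective morphism m_b^+ : K_b^+ → G with m_b^+ ∘ ι^+ = m_c ∘ l_c ∘ ι_K^{m} exists. -/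
/-! Suppose an injective `m_b^+ : K_b^+ → G` extending `m_c ∘ l_c ∘ ι_K^m` sent `x` outside
`m_c(L_c)`. Gluing `K_b^+` onto `K_c` over `K_b` gives a strictly larger factorisation
`r_g = r_c' ∘ ι_K^{m'}` through `K_c' = K_c ⊔_{K_b} K_b^+`, injective because `x ∉ r_c(K_c)`.
Both `m_c ∘ l_c` and `m_b^+` glue to an injective `e_2' : K_c' → G`, and the pushout
`L_c'' = L_i' ⊔_{K_b} K_c'` maps injectively into `G` as well, since in the pushout square of
`L_c` the images of `L_i'` and `K_c` meet only in `K_b`. This contradicts the second clause of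
local completeness, so alternative (1) always holds. -/

/-! ## Finite graphs and graph morphisms -/

/-- A finite graph: nodes, edges, source and target functions. -/
structure Gra where
  V : Type
  E : Type
  finV : Finite V
  finE : Finite E
  src : E → V
  tar : E → V

attribute [instance] Gra.finV Gra.finE

/-- A graph morphism: commutes with source and target. -/
structure GraHom (G H : Gra) where
  fV : G.V → H.V
  fE : G.E → H.E
  comm_src : ∀ e, H.src (fE e) = fV (G.src e)
  comm_tar : ∀ e, H.tar (fE e) = fV (G.tar e)

def GraHom.id (G : Gra) : GraHom G G :=
  ⟨fun v => v, fun e => e, fun _ => rfl, fun _ => rfl⟩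

def GraHom.comp {G H K : Gra} (g : GraHom H K) (f : GraHom G H) : GraHom G K where
  fV := g.fV ∘ f.fV
  fE := g.fE ∘ f.fE
  comm_src e := by simp only [Function.comp_apply, g.comm_src, f.comm_src]
  comm_tar e := by simp only [Function.comp_apply, g.comm_tar, f.comm_tar]

/-! ## Typed graphs over a fixed type graph -/

/-- A typed graph over the type graph `TG`. -/
structure TGraph (TG : Gra) where
  gr : Gra
  typ : GraHom gr TG

/-- A typed graph morphism. -/
structure THom {TG : Gra} (A B : TGraph TG) extends GraHom A.gr B.gr where
  typV : ∀ v, B.typ.fV (toGraHom.fV v) = A.typ.fV v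
  typE : ∀ e, B.typ.fE (toGraHom.fE e) = A.typ.fE e

def THom.id {TG : Gra} (A : TGraph TG) : THom A A :=
  ⟨GraHom.id A.gr, fun _ => rfl, fun _ => rfl⟩

def THom.comp {TG : Gra} {A B C : TGraph TG} (g : THom B C) (f : THom A B) : THom A C :=
  ⟨g.toGraHom.comp f.toGraHom,
   fun v => (g.typV (f.toGraHom.fV v)).trans (f.typV v),
   fun e => (g.typE (f.toGraHom.fE e)).trans (f.typE e)⟩

def THom.Injective {TG : Gra} {A B : TGraph TG} (f : THom A B) : Prop :=
  Function.Injective f.fV ∧ Function.Injective f.fE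

def THom.Bijective {TG : Gra} {A B : TGraph TG} (f : THom A B) : Prop :=
  Function.Bijective f.fV ∧ Function.Bijective f.fE

/-- The action of a typed morphism on elements (nodes and edges). -/
def THom.elem {TG : Gra} {A B : TGraph TG} (f : THom A B) :
    A.gr.V ⊕ A.gr.E → B.gr.V ⊕ B.gr.E :=
  Sum.map f.fV f.fE

/-! ## Pullback and pushout squares of typed graphs -/

/-- The square `f ∘ pa = g ∘ pb` (with apex `P`) is a pullback. -/
def IsPB {TG : Gra} {P A B C : TGraph TG} (pa : THom P A) (pb : THom P B)
    (f : THom A C) (g : THom B C) : Prop :=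
  f.comp pa = g.comp pb ∧
  ∀ (X : TGraph TG) (qa : THom X A) (qb : THom X B), f.comp qa = g.comp qb →
    ∃! h : THom X P, pa.comp h = qa ∧ pb.comp h = qb

/-- The square `ia ∘ f = ib ∘ g` (with corner object the codomain of `ia`/`ib`)
is a pushout. -/
def IsPO {TG : Gra} {P A B C : TGraph TG} (f : THom P A) (g : THom P B)
    (ia : THom A C) (ib : THom B C) : Prop :=
  ia.comp f = ib.comp g ∧
  ∀ (X : TGraph TG) (qa : THom A X) (qb : THom B X), qa.comp f = qb.comp g →
    ∃! h : THom C X, h.comp ia = qa ∧ h.comp ib = qb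

/-! ## Application conditions, rules -/

/-- An application condition over `L`, given semantically: a predicate on
morphisms with domain `L`. -/
def AppCond {TG : Gra} (L : TGraph TG) : Type 1 :=
  ∀ X : TGraph TG, THom L X → Prop

/-- Shift of an application condition along a morphism, characterized
semantically: `m ⊨ Shift(b, ac)` iff `m ∘ b ⊨ ac`. -/
def Shift {TG : Gra} {L L' : TGraph TG} (b : THom L L') (ac : AppCond L) :
    AppCond L' :=
  fun X m => ac X (m.comp b)

/-- Semantic equivalence of application conditions (on injective morphisms). -/
def CondEquiv {TG : Gra} {L : TGraph TG} (ac₁ ac₂ : AppCond L) : Prop :=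
  ∀ (X : TGraph TG) (m : THom L X), m.Injective → (ac₁ X m ↔ ac₂ X m)

/-- A rule: a span of injective typed morphisms together with an application
condition over the left-hand side. -/
structure Rule (TG : Gra) where
  L : TGraph TG
  K : TGraph TG
  R : TGraph TG
  l : THom K L
  r : THom K R
  l_inj : l.Injective
  r_inj : r.Injective
  ac : AppCond L

/-- The dangling condition for a pre-match `m` of a rule: no node of `L \ K` is
mapped to a node of `G` incident to an edge outside `m(E_L)`. -/
def Dangling {TG : Gra} (ρr : Rule TG) {G : TGraph TG} (m : THom ρr.L G) : Prop :=
  ∀ v : ρr.L.gr.V, (∀ k : ρr.K.gr.V, ρr.l.fV k ≠ v) →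
    ∀ e : G.gr.E, (G.gr.src e = m.fV v ∨ G.gr.tar e = m.fV v) →
      ∃ e' : ρr.L.gr.E, m.fE e' = e

/-- A match for a rule: an injective morphism satisfying the application
condition at which the rule is applicable (dangling condition). -/
def IsMatch {TG : Gra} (ρr : Rule TG) {G : TGraph TG} (m : THom ρr.L G) : Prop :=
  m.Injective ∧ ρr.ac G m ∧ Dangling ρr m

/-- Isomorphism of rules. -/
def RuleIso {TG : Gra} (ρ₁ ρ₂ : Rule TG) : Prop :=
  ∃ (fL : THom ρ₁.L ρ₂.L) (fK : THom ρ₁.K ρ₂.K) (fR : THom ρ₁.R ρ₂.R),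
    fL.Bijective ∧ fK.Bijective ∧ fR.Bijective ∧
    fL.comp ρ₁.l = ρ₂.l.comp fK ∧ fR.comp ρ₁.r = ρ₂.r.comp fK ∧
    CondEquiv ρ₂.ac (Shift fL ρ₁.ac)

/-! ## Effect-oriented rules -/

/-- An effect-oriented rule: a maximal rule
`ρ_g = (L_g ←l_g– K –r_g→ R_g, ac_g)` together with a base rule
`ρ_b = (L_b ←l_b– K –r_b→ R_b, ac_b)` that is a subrule of it via
`(ι_L, id, ι_R)` (the interfaces coincide, `ι_K` is the identity). -/
structure EORule (TG : Gra) where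
  K : TGraph TG
  Lb : TGraph TG
  Rb : TGraph TG
  Lg : TGraph TG
  Rg : TGraph TG
  lb : THom K Lb
  rb : THom K Rb
  lg : THom K Lg
  rg : THom K Rg
  ιL : THom Lb Lg
  ιR : THom Rb Rg
  lb_inj : lb.Injective
  rb_inj : rb.Injective
  lg_inj : lg.Injective
  rg_inj : rg.Injective
  ιL_inj : ιL.Injective
  ιR_inj : ιR.Injective
  commL : ιL.comp lb = lg
  commR : ιR.comp rb = rg
  pbL : IsPB lb (THom.id K) ιL lg
  pbR : IsPB rb (THom.id K) ιR rg
  acb : AppCond Lb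
  acg : AppCond Lg
  ac_equiv : CondEquiv acg (Shift ιL acb)

/-- An induced rule of an effect-oriented rule, given by a factorisation
`ι_L = ι_L^{m′} ∘ ι_L^{i′}` through `L_i′`, a factorisation
`r_g = r_c ∘ ι_K^{m}` through `K_c` whose square with `(r_b, ι_R)` is a
pullback, and a pushout `(L_c, u, l_c)` of `k_1 = ι_L^{i′} ∘ l_b` and
`ι_K^{m}`; the right-hand side is `R_g`. -/
structure InducedRule {TG : Gra} (ρ : EORule TG) where
  Li : TGraph TG
  ιLi : THom ρ.Lb Li
  ιLm : THom Li ρ.Lg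
  ιLi_inj : ιLi.Injective
  ιLm_inj : ιLm.Injective
  factL : ιLm.comp ιLi = ρ.ιL
  Kc : TGraph TG
  ιKm : THom ρ.K Kc
  rc : THom Kc ρ.Rg
  ιKm_inj : ιKm.Injective
  rc_inj : rc.Injective
  factR : rc.comp ιKm = ρ.rg
  pbRc : IsPB ρ.rb ιKm ρ.ιR rc
  Lc : TGraph TG
  u : THom Li Lc
  lc : THom Kc Lc
  u_inj : u.Injective
  lc_inj : lc.Injective
  po : IsPO (ιLi.comp ρ.lb) ιKm u lc

namespace InducedRule

variable {TG : Gra} {ρ : EORule TG}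

/-- `k_1 = ι_L^{i′} ∘ l_b`. -/
def k1 (c : InducedRule ρ) : THom ρ.K c.Li := c.ιLi.comp ρ.lb

/-- `ι_L^c = u ∘ ι_L^{i′}`, the embedding of `L_b` into `L_c`. -/
def ιLc (c : InducedRule ρ) : THom ρ.Lb c.Lc := c.u.comp c.ιLi

/-- The application condition of the induced rule: `ac_c = Shift(ι_L^c, ac_b)`. -/
def acc (c : InducedRule ρ) : AppCond c.Lc := Shift c.ιLc ρ.acb

/-- The induced rule as a rule `(L_c ←l_c– K_c –r_c→ R_g, ac_c)`. -/
def rule (c : InducedRule ρ) : Rule TG where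
  L := c.Lc
  K := c.Kc
  R := ρ.Rg
  l := c.lc
  r := c.rc
  l_inj := c.lc_inj
  r_inj := c.rc_inj
  ac := c.acc

/-- The size of an induced rule: `|L_i′ \ L_b| + |K_c \ K_b|`
(counting nodes and edges). -/
noncomputable def size (c : InducedRule ρ) : ℕ :=
  Nat.card {x : c.Li.gr.V ⊕ c.Li.gr.E // x ∉ Set.range c.ιLi.elem} +
  Nat.card {x : c.Kc.gr.V ⊕ c.Kc.gr.E // x ∉ Set.range c.ιKm.elem}

end InducedRule

/-! ## Double-pushout transformations -/

/-- A double-pushout (DPO) transformation `G ⟹_{ρr,m} H`. -/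
structure DPOTrafo {TG : Gra} (ρr : Rule TG) (G H : TGraph TG) where
  m : THom ρr.L G
  m_inj : m.Injective
  m_ac : ρr.ac G m
  D : TGraph TG
  d : THom ρr.K D
  g : THom D G
  h : THom D H
  n : THom ρr.R H
  po1 : IsPO ρr.l d m g
  po2 : IsPO ρr.r d n h

/-! ## Locally complete matches -/

/-- A match `m_c` for an induced rule, compatible with the pre-match
`m_b = m_c ∘ ι_L^c` for the base rule, is locally complete w.r.t. `m_b`:
no strictly larger factorisation (on the deletion or the creation side)
admits a compatible injective extension that induces an injective morphism
on the corresponding pushout object. -/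
def LocallyComplete {TG : Gra} {ρ : EORule TG} (c : InducedRule ρ)
    {G : TGraph TG} (mc : THom c.Lc G) : Prop :=
  (∀ (Li'' : TGraph TG) (iLi'' : THom ρ.Lb Li'') (iLm'' : THom Li'' ρ.Lg)
      (j : THom c.Li Li''),
      iLi''.Injective → iLm''.Injective → iLm''.comp iLi'' = ρ.ιL →
      j.Injective → ¬ j.Bijective → j.comp c.ιLi = iLi'' → iLm''.comp j = c.ιLm →
      ∀ e1' : THom Li'' G, e1'.Injective → e1'.comp iLi'' = mc.comp c.ιLc →
      ∀ (Lc'' : TGraph TG) (u'' : THom Li'' Lc'') (lc'' : THom c.Kc Lc''),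
        IsPO (iLi''.comp ρ.lb) c.ιKm u'' lc'' →
      ∀ w : THom Lc'' G, w.comp u'' = e1' → w.comp lc'' = mc.comp c.lc →
        ¬ w.Injective) ∧
  (∀ (Kc' : TGraph TG) (iKm' : THom ρ.K Kc') (rc' : THom Kc' ρ.Rg)
      (j : THom c.Kc Kc'),
      iKm'.Injective → rc'.Injective → rc'.comp iKm' = ρ.rg →
      j.Injective → ¬ j.Bijective → j.comp c.ιKm = iKm' → rc'.comp j = c.rc →
      ∀ e2' : THom Kc' G, e2'.Injective → e2'.comp iKm' = (mc.comp c.ιLc).comp ρ.lb →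
      ∀ (Lc'' : TGraph TG) (u'' : THom c.Li Lc'') (lc'' : THom Kc' Lc''),
        IsPO (c.ιLi.comp ρ.lb) iKm' u'' lc'' →
      ∀ w : THom Lc'' G, w.comp u'' = mc.comp c.u → w.comp lc'' = e2' →
        ¬ w.Injective)


namespace GraHom

theorem ext {G H : Gra} {f g : GraHom G H} (hV : f.fV = g.fV) (hE : f.fE = g.fE) :
    f = g := by
  cases f; cases g; cases hV; cases hE; rfl

end GraHom

namespace THom

variable {TG : Gra} {A B C : TGraph TG}

theorem ext {f g : THom A B} (hV : f.fV = g.fV) (hE : f.fE = g.fE) : f = g := by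
  obtain ⟨f, _, _⟩ := f
  obtain ⟨g, _, _⟩ := g
  obtain rfl : f = g := GraHom.ext hV hE
  rfl

theorem Injective.comp {f : THom B C} {g : THom A B} (hf : f.Injective)
    (hg : g.Injective) : (f.comp g).Injective :=
  ⟨hf.1.comp hg.1, hf.2.comp hg.2⟩

theorem elem_comp (f : THom B C) (g : THom A B) (z : A.gr.V ⊕ A.gr.E) :
    (f.comp g).elem z = f.elem (g.elem z) := by
  cases z <;> rfl

theorem Injective.elem {f : THom A B} (hf : f.Injective) : Function.Injective f.elem :=
  hf.1.sumMap hf.2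

theorem inl_mem_range_elem {f : THom A B} {v : B.gr.V} :
    Sum.inl v ∈ Set.range f.elem ↔ v ∈ Set.range f.fV := by
  simp [THom.elem, Set.mem_range]

theorem inr_mem_range_elem {f : THom A B} {e : B.gr.E} :
    Sum.inr e ∈ Set.range f.elem ↔ e ∈ Set.range f.fE := by
  simp [THom.elem, Set.mem_range]

end THom

section PushoutFun

variable {α β γ : Type} (p : α → β) (q : α → γ)

/-- The map `γ → β ⊔_α γ` for injective `q`, with the pushout of sets realised as
`β ⊕ (γ \ q(α))`. -/
noncomputable def pushoutFun (z : γ) : β ⊕ {z : γ // z ∉ Set.range q} :=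
  open Classical in
  if h : z ∈ Set.range q then Sum.inl (p h.choose) else Sum.inr ⟨z, h⟩

variable {p q}

theorem pushoutFun_apply (hq : Function.Injective q) (a : α) :
    pushoutFun p q (q a) = Sum.inl (p a) := by
  have h : q a ∈ Set.range q := ⟨a, rfl⟩
  rw [pushoutFun, dif_pos h, hq h.choose_spec]

theorem pushoutFun_of_notMem {z : γ} (hz : z ∉ Set.range q) :
    pushoutFun p q z = Sum.inr ⟨z, hz⟩ :=
  dif_neg hz

theorem sumElim_pushoutFun {δ : Type} {f : β → δ} {g : γ → δ} (hfg : ∀ a, f (p a) = g (q a))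
    (z : γ) : Sum.elim f (fun w => g w.1) (pushoutFun p q z) = g z := by
  by_cases hz : z ∈ Set.range q
  · rw [pushoutFun, dif_pos hz, Sum.elim_inl, hfg, hz.choose_spec]
  · rw [pushoutFun_of_notMem hz, Sum.elim_inr]

theorem mem_range_of_pushoutFun_eq_inl {z : γ} {b : β} (h : pushoutFun p q z = Sum.inl b) :
    z ∈ Set.range q := by
  by_contra hz
  rw [pushoutFun_of_notMem hz] at h
  exact Sum.inr_ne_inl h

end PushoutFun

namespace Gra

variable {A B C : Gra}

/-- This is a pushout of `B ←p– A –q→ C` only when `q` is injective. -/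
noncomputable def pushout (p : GraHom A B) (q : GraHom A C) : Gra where
  V := B.V ⊕ {v // v ∉ Set.range q.fV}
  E := B.E ⊕ {e // e ∉ Set.range q.fE}
  finV := inferInstance
  finE := inferInstance
  src := Sum.elim (fun e => Sum.inl (B.src e)) fun e => pushoutFun p.fV q.fV (C.src e)
  tar := Sum.elim (fun e => Sum.inl (B.tar e)) fun e => pushoutFun p.fV q.fV (C.tar e)

def pushout.desc {X : Gra} (p : GraHom A B) (q : GraHom A C) (qB : GraHom B X)
    (qC : GraHom C X) (hV : ∀ a, qB.fV (p.fV a) = qC.fV (q.fV a)) :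
    GraHom (pushout p q) X where
  fV := Sum.elim qB.fV fun v => qC.fV v.1
  fE := Sum.elim qB.fE fun e => qC.fE e.1
  comm_src := by
    rintro (e | e)
    · exact qB.comm_src e
    · exact (qC.comm_src e).trans (sumElim_pushoutFun hV _).symm
  comm_tar := by
    rintro (e | e)
    · exact qB.comm_tar e
    · exact (qC.comm_tar e).trans (sumElim_pushoutFun hV _).symm

variable (p : GraHom A B) (q : GraHom A C)

theorem pushout.src_pushoutFun (hqV : Function.Injective q.fV) (hqE : Function.Injective q.fE)
    (e : C.E) : (pushout p q).src (pushoutFun p.fE q.fE e) = pushoutFun p.fV q.fV (C.src e) := by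
  by_cases he : e ∈ Set.range q.fE
  · obtain ⟨a, rfl⟩ := he
    rw [pushoutFun_apply hqE, q.comm_src, pushoutFun_apply hqV]
    exact congrArg Sum.inl (p.comm_src a)
  · rw [pushoutFun_of_notMem he]
    rfl

theorem pushout.tar_pushoutFun (hqV : Function.Injective q.fV) (hqE : Function.Injective q.fE)
    (e : C.E) : (pushout p q).tar (pushoutFun p.fE q.fE e) = pushoutFun p.fV q.fV (C.tar e) := by
  by_cases he : e ∈ Set.range q.fE
  · obtain ⟨a, rfl⟩ := he
    rw [pushoutFun_apply hqE, q.comm_tar, pushoutFun_apply hqV]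
    exact congrArg Sum.inl (p.comm_tar a)
  · rw [pushoutFun_of_notMem he]
    rfl

end Gra

namespace TGraph

variable {TG : Gra} {A B C X : TGraph TG}

noncomputable def pushout (p : THom A B) (q : THom A C) : TGraph TG where
  gr := Gra.pushout p.toGraHom q.toGraHom
  typ := Gra.pushout.desc _ _ B.typ C.typ fun a => (p.typV a).trans (q.typV a).symm

namespace pushout

variable (p : THom A B) (q : THom A C)

def inl : THom B (pushout p q) where
  fV := Sum.inl
  fE := Sum.inl
  comm_src _ := rfl
  comm_tar _ := rfl
  typV _ := rfl
  typE _ := rfl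

noncomputable def inr (hq : q.Injective) : THom C (pushout p q) where
  fV := pushoutFun p.fV q.fV
  fE := pushoutFun p.fE q.fE
  comm_src := Gra.pushout.src_pushoutFun p.toGraHom q.toGraHom hq.1 hq.2
  comm_tar := Gra.pushout.tar_pushoutFun p.toGraHom q.toGraHom hq.1 hq.2
  typV v := sumElim_pushoutFun (fun a => (p.typV a).trans (q.typV a).symm) v
  typE e := sumElim_pushoutFun (fun a => (p.typE a).trans (q.typE a).symm) e

variable {p q}

noncomputable def desc (qB : THom B X) (qC : THom C X) (hco : qB.comp p = qC.comp q) :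
    THom (pushout p q) X where
  toGraHom := Gra.pushout.desc _ _ qB.toGraHom qC.toGraHom fun a => congrArg (·.fV a) hco
  typV := by
    rintro (v | v)
    · exact qB.typV v
    · exact qC.typV v
  typE := by
    rintro (e | e)
    · exact qB.typE e
    · exact qC.typE e

variable (qB : THom B X) (qC : THom C X) (hco : qB.comp p = qC.comp q)

theorem inl_injective : (inl p q).Injective :=
  ⟨Sum.inl_injective, Sum.inl_injective⟩

theorem inl_comp_eq_inr_comp (hq : q.Injective) : (inl p q).comp p = (inr p q hq).comp q :=
  THom.ext (funext fun a => (pushoutFun_apply hq.1 a).symm)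
    (funext fun a => (pushoutFun_apply hq.2 a).symm)

theorem desc_comp_inl : (desc qB qC hco).comp (inl p q) = qB :=
  THom.ext rfl rfl

theorem desc_comp_inr (hq : q.Injective) : (desc qB qC hco).comp (inr p q hq) = qC :=
  THom.ext (funext (sumElim_pushoutFun (p := p.fV) fun a => congrArg (·.fV a) hco))
    (funext (sumElim_pushoutFun (p := p.fE) fun a => congrArg (·.fE a) hco))

theorem eq_desc (hq : q.Injective) (h : THom (pushout p q) X)
    (h₁ : h.comp (inl p q) = qB) (h₂ : h.comp (inr p q hq) = qC) : h = desc qB qC hco := by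
  subst h₁ h₂
  refine THom.ext (funext ?_) (funext ?_)
  · rintro (v | ⟨v, hv⟩)
    · rfl
    · exact congrArg h.fV (pushoutFun_of_notMem hv).symm
  · rintro (e | ⟨e, he⟩)
    · rfl
    · exact congrArg h.fE (pushoutFun_of_notMem he).symm

theorem isPO (hq : q.Injective) : IsPO p q (inl p q) (inr p q hq) :=
  ⟨inl_comp_eq_inr_comp hq, fun _ qB qC hco =>
    ⟨desc qB qC hco, ⟨desc_comp_inl qB qC hco, desc_comp_inr qB qC hco hq⟩,
      fun h hh => eq_desc qB qC hco hq h hh.1 hh.2⟩⟩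

theorem desc_injective (hB : qB.Injective) (hC : qC.Injective)
    (hBC : ∀ b y, y ∉ Set.range q.elem → qB.elem b ≠ qC.elem y) :
    (desc qB qC hco).Injective := by
  refine ⟨hB.1.sumElim (hC.1.comp Subtype.val_injective) ?_,
    hB.2.sumElim (hC.2.comp Subtype.val_injective) ?_⟩
  · rintro b ⟨v, hv⟩ h
    exact hBC (.inl b) (.inl v) (THom.inl_mem_range_elem.not.2 hv) (congrArg Sum.inl h)
  · rintro b ⟨e, he⟩ h
    exact hBC (.inr b) (.inr e) (THom.inr_mem_range_elem.not.2 he) (congrArg Sum.inr h)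

theorem exists_desc_elem_eq {z : (pushout p q).gr.V ⊕ (pushout p q).gr.E}
    (hz : z ∉ Set.range (inl p q).elem) :
    ∃ y ∉ Set.range q.elem, (desc qB qC hco).elem z = qC.elem y := by
  rcases z with (b | ⟨v, hv⟩) | (b | ⟨e, he⟩)
  · exact absurd ⟨.inl b, rfl⟩ hz
  · exact ⟨.inl v, THom.inl_mem_range_elem.not.2 hv, rfl⟩
  · exact absurd ⟨.inr b, rfl⟩ hz
  · exact ⟨.inr e, THom.inr_mem_range_elem.not.2 he, rfl⟩

theorem inl_not_bijective {y : C.gr.V ⊕ C.gr.E} (hy : y ∉ Set.range q.elem) :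
    ¬ (inl p q).Bijective := by
  rintro ⟨⟨-, hV⟩, ⟨-, hE⟩⟩
  rcases y with v | e
  · obtain ⟨_, h⟩ := hV (.inr ⟨v, THom.inl_mem_range_elem.not.1 hy⟩)
    exact Sum.inl_ne_inr h
  · obtain ⟨_, h⟩ := hE (.inr ⟨e, THom.inr_mem_range_elem.not.1 hy⟩)
    exact Sum.inl_ne_inr h

end pushout

end TGraph

open TGraph

section Pushout

variable {TG : Gra} {P A C D : TGraph TG}

theorem IsPO.mem_range_of_elem_eq {k : THom P A} {f : THom P C} {u : THom A D}
    {l : THom C D} (hpo : IsPO k f u l) (hf : f.Injective) {a : A.gr.V ⊕ A.gr.E}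
    {z : C.gr.V ⊕ C.gr.E} (h : u.elem a = l.elem z) : z ∈ Set.range f.elem := by
  obtain ⟨φ, ⟨hφu, hφl⟩, -⟩ :=
    hpo.2 _ (pushout.inl k f) (pushout.inr k f hf) (pushout.inl_comp_eq_inr_comp hf)
  have key : (pushout.inl k f).elem a = (pushout.inr k f hf).elem z := by
    rw [← hφu, ← hφl, THom.elem_comp, THom.elem_comp, h]
  rcases a with a | a <;> rcases z with z | z <;>
    simp only [THom.elem, Sum.map_inl, Sum.map_inr, Sum.inl.injEq, Sum.inr.injEq,
      reduceCtorEq] at key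
  · exact THom.inl_mem_range_elem.2 (mem_range_of_pushoutFun_eq_inl key.symm)
  · exact THom.inr_mem_range_elem.2 (mem_range_of_pushoutFun_eq_inl key.symm)

theorem IsPO.desc_injective {k : THom P A} {f : THom P C} {u : THom A D} {l : THom C D}
    (hpo : IsPO k f u l) (hf : f.Injective) (hu : u.Injective) {C' G : TGraph TG} {j : THom C C'}
    {m : THom D G} (hm : m.Injective) {e : THom C' G} (he : e.Injective)
    (hej : e.comp j = m.comp l) (hnew : ∀ z ∉ Set.range j.elem, e.elem z ∉ Set.range m.elem)
    (hco : (m.comp u).comp k = e.comp (j.comp f)) :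
    (pushout.desc (m.comp u) e hco).Injective := by
  refine pushout.desc_injective _ _ hco (hm.comp hu) he fun a z hz h => ?_
  by_cases hzj : z ∈ Set.range j.elem
  · obtain ⟨c, rfl⟩ := hzj
    have hul : u.elem a = l.elem c := hm.elem <| calc
      m.elem (u.elem a) = (m.comp u).elem a := (THom.elem_comp _ _ _).symm
      _ = (e.comp j).elem c := by rw [h, THom.elem_comp]
      _ = m.elem (l.elem c) := by rw [hej, THom.elem_comp]
    obtain ⟨p, rfl⟩ := hpo.mem_range_of_elem_eq hf hul
    exact hz ⟨p, THom.elem_comp _ _ _⟩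
  · exact hnew z hzj ⟨u.elem a, (THom.elem_comp _ _ _).symm.trans h⟩

end Pushout

theorem LocallyComplete.surjective_of_extension {TG : Gra} {ρ : EORule TG}
    {c : InducedRule ρ} {G : TGraph TG} {mc : THom c.Lc G} (hlc : LocallyComplete c mc)
    (hmc : mc.Injective) {Kbp : TGraph TG} (iplus : THom ρ.K Kbp) {emb : THom Kbp ρ.Rg}
    (hemb : emb.Injective) (hcomm : emb.comp iplus = ρ.rg) {mbp : THom Kbp G}
    (hmbp : mbp.Injective) (hcompat : mbp.comp iplus = mc.comp (c.lc.comp c.ιKm))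
    (hnew_rc : ∀ y ∉ Set.range iplus.elem, emb.elem y ∉ Set.range c.rc.elem)
    (hnew_mc : ∀ y ∉ Set.range iplus.elem, mbp.elem y ∉ Set.range mc.elem) :
    Function.Surjective iplus.elem := by
  intro y₀
  by_contra hy₀
  let j := pushout.inl c.ιKm iplus
  let rc' := pushout.desc c.rc emb (c.factR.trans hcomm.symm)
  have hrc'j : rc'.comp j = c.rc := pushout.desc_comp_inl _ _ _
  have hrc' : rc'.Injective := pushout.desc_injective _ _ _ c.rc_inj hemb
    fun b y hy h => hnew_rc y hy ⟨b, h⟩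
  let e₂' := pushout.desc (mc.comp c.lc) mbp hcompat.symm
  have he₂' : e₂'.Injective := pushout.desc_injective _ _ _ (hmc.comp c.lc_inj) hmbp
    fun b y hy h => hnew_mc y hy ⟨c.lc.elem b, (THom.elem_comp _ _ _).symm.trans h⟩
  have he₂'j : e₂'.comp j = mc.comp c.lc := pushout.desc_comp_inl _ _ _
  have hco : (mc.comp c.u).comp (c.ιLi.comp ρ.lb) = e₂'.comp (j.comp c.ιKm) := by
    show mc.comp (c.u.comp (c.ιLi.comp ρ.lb)) = (e₂'.comp j).comp c.ιKm
    rw [he₂'j, c.po.1]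
    rfl
  have hιKm' : (j.comp c.ιKm).Injective := pushout.inl_injective.comp c.ιKm_inj
  have hw : (pushout.desc (mc.comp c.u) e₂' hco).Injective := by
    refine c.po.desc_injective c.ιKm_inj c.u_inj hmc he₂' he₂'j (fun z hz => ?_) hco
    obtain ⟨y, hy, hz⟩ := pushout.exists_desc_elem_eq (mc.comp c.lc) mbp hcompat.symm hz
    exact hz ▸ hnew_mc y hy
  exact hlc.2 _ _ rc' j hιKm' hrc' ((congrArg (THom.comp · c.ιKm) hrc'j).trans c.factR)
    pushout.inl_injective (pushout.inl_not_bijective hy₀) rfl hrc'j e₂' he₂' hco.symm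
    _ _ _ (pushout.isPO hιKm') _ (pushout.desc_comp_inl _ _ hco)
    (pushout.desc_comp_inr _ _ hco hιKm') hw

theorem characterising_eo_transformations_creation_general {TG : Gra}
    (ρ : EORule TG) (c : InducedRule ρ) (G H : TGraph TG)
    (t : DPOTrafo c.rule G H)
    (hlc : LocallyComplete c t.m)
    (x : ρ.Rg.gr.V ⊕ ρ.Rg.gr.E)
    (hx1 : x ∉ Set.range c.rc.elem)
    (Kbp : TGraph TG) (iplus : THom ρ.K Kbp) (emb : THom Kbp ρ.Rg)
    (hemb : emb.Injective)
    (hcomm : emb.comp iplus = ρ.rg)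
    (hrange : Set.range emb.elem = Set.range ρ.rg.elem ∪ {x}) :
    (∀ mbp : THom Kbp G, mbp.Injective →
        mbp.comp iplus = t.m.comp (c.lc.comp c.ιKm) →
        ∀ x' : Kbp.gr.V ⊕ Kbp.gr.E, emb.elem x' = x →
          mbp.elem x' ∈ Set.range t.m.elem) ∨
    ¬ ∃ mbp : THom Kbp G, mbp.Injective ∧
        mbp.comp iplus = t.m.comp (c.lc.comp c.ιKm) := by
  refine Or.inl fun mbp hmbp hcompat x' hx' => ?_
  by_contra hx'm
  have hx_rg : x ∉ Set.range ρ.rg.elem := by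
    rintro ⟨z, rfl⟩
    exact hx1 ⟨c.ιKm.elem z, by rw [← THom.elem_comp, c.factR]⟩
  have hnew : ∀ y ∉ Set.range iplus.elem, y = x' := by
    intro y hy
    rcases hrange.subset ⟨y, rfl⟩ with ⟨z, hz⟩ | hyx
    · exact absurd ⟨z, hemb.elem (by rw [← THom.elem_comp, hcomm, hz])⟩ hy
    · exact hemb.elem (hyx.trans hx'.symm)
  obtain ⟨z, hz⟩ := hlc.surjective_of_extension t.m_inj iplus hemb hcomm hmbp hcompat
    (fun y hy => by rwa [hnew y hy, hx']) (fun y hy => by rwa [hnew y hy]) x'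
  exact hx_rg ⟨z, by rw [← hcomm, THom.elem_comp, hz, hx']⟩

/-- **Theorem (Characterising effect-oriented transformations, creation part).**
Let `(ρ_b, ρ_g, ι)` be an effect-oriented rule and `t : G ⟹_{ρ_c,m_c} H` an
effect-oriented transformation via one of its induced rules `ρ_c`. Let
`x ∈ R_c \ (K_c ∪ R_b)` represent one of the potential creations performed by
`t`, let `K_b^+` be the extension of `K_b` with `x` (a graph extending `K_b`
that embeds into `R_g` over `r_g` with image exactly `r_g(K_b) ∪ {x}`), and
`ι^+ : K_b → K_b^+` the corresponding inclusion. Then either (1) for every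
injective morphism `m_b^+ : K_b^+ → G` with
`m_b^+ ∘ ι^+ = m_c ∘ l_c ∘ ι_K^{m}`, the element `m_b^+(x)` of `G` has a
pre-image from `L_c` under `m_c`, or (2) no such injective morphism exists. -/
theorem characterising_eo_transformations_creation {TG : Gra}
    (ρ : EORule TG) (c : InducedRule ρ) (G H : TGraph TG)
    (t : DPOTrafo c.rule G H)
    (hlc : LocallyComplete c t.m)
    (x : ρ.Rg.gr.V ⊕ ρ.Rg.gr.E)
    (hx1 : x ∉ Set.range c.rc.elem) (hx2 : x ∉ Set.range ρ.ιR.elem)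
    (Kbp : TGraph TG) (iplus : THom ρ.K Kbp) (emb : THom Kbp ρ.Rg)
    (hiplus : iplus.Injective) (hemb : emb.Injective)
    (hcomm : emb.comp iplus = ρ.rg)
    (hrange : Set.range emb.elem = Set.range ρ.rg.elem ∪ {x}) :
    (∀ mbp : THom Kbp G, mbp.Injective →
        mbp.comp iplus = t.m.comp (c.lc.comp c.ιKm) →
        ∀ x' : Kbp.gr.V ⊕ Kbp.gr.E, emb.elem x' = x →
          mbp.elem x' ∈ Set.range t.m.elem) ∨
    ¬ ∃ mbp : THom Kbp G, mbp.Injective ∧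
        mbp.comp iplus = t.m.comp (c.lc.comp c.ιKm) :=
  characterising_eo_transformations_creation_general ρ c G H t hlc x hx1 Kbp iplus emb hemb hcomm
    hrange
end

section
/- Let (ρ_b, ρ_g, ι) be an effect-oriented rule, m_b : L_b → G a pre-match for its base rule, and e_1 : L_i′ → G and e_2 : K_c → G left and right extension matches for an induced rule ρ_c satisfying e_1 ∘ ι_L^{i′} = m_b and e_2 ∘ ι_K^{m} = m_b ∘ l_b, respectively. Then the induced unique morphism m_c : L_c → G (obtained from e_1 and e_2 by the universal property of the pushout L_c) is injective and satisfies the dangling condition for ρ_c if and only if (i) e_1 and e_2 only identify elements that stem from K_b = K_g, i.e., e_1(x) = e_2(y) implies that x and y have a common pre-image in K_b, and (ii) e_1 satisfies the dangling condition for the morphism k_1, i.e., {v ∈ V_{L_i′} | ∃ e ∈ E_G \ e_1(E_{L_i′}) with src_G(e) = e_1(v) or tar_G(e) = e_1(v)} ⊆ k_1(V_{K_b}). -/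
/-! ## Auxiliary lemmas for the proof -/

theorem THom.ext' {TG : Gra} {A B : TGraph TG} {f g : THom A B}
    (hV : f.fV = g.fV) (hE : f.fE = g.fE) : f = g := by
  obtain ⟨⟨fV, fE, _, _⟩, _, _⟩ := f
  obtain ⟨⟨gV, gE, _, _⟩, _, _⟩ := g
  simp only at hV hE
  subst hV; subst hE; rfl

theorem THom.id_comp {TG : Gra} {A B : TGraph TG} (f : THom A B) :
    (THom.id B).comp f = f := THom.ext' rfl rfl

theorem THom.comp_assoc {TG : Gra} {A B C D : TGraph TG}
    (h : THom C D) (g : THom B C) (f : THom A B) :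
    (h.comp g).comp f = h.comp (g.comp f) := THom.ext' rfl rfl


theorem THom.congr_fV {TG : Gra} {A B : TGraph TG} {f g : THom A B} (h : f = g)
    (v : A.gr.V) : f.fV v = g.fV v := by rw [h]

theorem THom.congr_fE {TG : Gra} {A B : TGraph TG} {f g : THom A B} (h : f = g)
    (e : A.gr.E) : f.fE e = g.fE e := by rw [h]

section PushoutFacts

variable {TG : Gra} {K A B C : TGraph TG}

open Classical in
/-- the second injection into the explicit pushout, on nodes -/
noncomputable def i2V (f : THom K A) (g : THom K B) (v : B.gr.V) :
    A.gr.V ⊕ {y : B.gr.V // y ∉ Set.range g.fV} :=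
  if h : v ∈ Set.range g.fV then Sum.inl (f.fV h.choose) else Sum.inr ⟨v, h⟩

open Classical in
/-- the second injection into the explicit pushout, on edges -/
noncomputable def i2E (f : THom K A) (g : THom K B) (e : B.gr.E) :
    A.gr.E ⊕ {y : B.gr.E // y ∉ Set.range g.fE} :=
  if h : e ∈ Set.range g.fE then Sum.inl (f.fE h.choose) else Sum.inr ⟨e, h⟩

theorem i2V_g (f : THom K A) (g : THom K B) (hg : Function.Injective g.fV) (k : K.gr.V) :
    i2V f g (g.fV k) = Sum.inl (f.fV k) := by
  have h : g.fV k ∈ Set.range g.fV := ⟨k, rfl⟩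
  simp only [i2V, dif_pos h]
  exact congrArg _ (congrArg f.fV (hg h.choose_spec))

theorem i2E_g (f : THom K A) (g : THom K B) (hg : Function.Injective g.fE) (k : K.gr.E) :
    i2E f g (g.fE k) = Sum.inl (f.fE k) := by
  have h : g.fE k ∈ Set.range g.fE := ⟨k, rfl⟩
  simp only [i2E, dif_pos h]
  exact congrArg _ (congrArg f.fE (hg h.choose_spec))

/-- the explicit pushout graph -/
noncomputable def Pgra (f : THom K A) (g : THom K B) : Gra where
  V := A.gr.V ⊕ {y : B.gr.V // y ∉ Set.range g.fV}
  E := A.gr.E ⊕ {y : B.gr.E // y ∉ Set.range g.fE}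
  finV := by infer_instance
  finE := by infer_instance
  src := Sum.elim (fun e => Sum.inl (A.gr.src e)) (fun e => i2V f g (B.gr.src e.1))
  tar := Sum.elim (fun e => Sum.inl (A.gr.tar e)) (fun e => i2V f g (B.gr.tar e.1))

theorem tPV_i2V (f : THom K A) (g : THom K B) (v : B.gr.V) :
    Sum.elim A.typ.fV (fun y : {y : B.gr.V // y ∉ Set.range g.fV} => B.typ.fV y.1)
      (i2V f g v) = B.typ.fV v := by
  by_cases h : v ∈ Set.range g.fV
  · simp only [i2V, dif_pos h, Sum.elim_inl]
    rw [f.typV]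
    conv_rhs => rw [← h.choose_spec]
    rw [g.typV]
  · simp only [i2V, dif_neg h, Sum.elim_inr]

theorem tPE_i2E (f : THom K A) (g : THom K B) (e : B.gr.E) :
    Sum.elim A.typ.fE (fun y : {y : B.gr.E // y ∉ Set.range g.fE} => B.typ.fE y.1)
      (i2E f g e) = B.typ.fE e := by
  by_cases h : e ∈ Set.range g.fE
  · simp only [i2E, dif_pos h, Sum.elim_inl]
    rw [f.typE]
    conv_rhs => rw [← h.choose_spec]
    rw [g.typE]
  · simp only [i2E, dif_neg h, Sum.elim_inr]

/-- the explicit pushout as a typed graph -/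
noncomputable def Ptyp (f : THom K A) (g : THom K B) : TGraph TG where
  gr := Pgra f g
  typ := {
    fV := Sum.elim A.typ.fV (fun y => B.typ.fV y.1)
    fE := Sum.elim A.typ.fE (fun y => B.typ.fE y.1)
    comm_src := by
      rintro (e | e)
      · exact A.typ.comm_src e
      · show TG.src (B.typ.fE e.1) = _
        rw [B.typ.comm_src, ← tPV_i2V f g (B.gr.src e.1)]
        rfl
    comm_tar := by
      rintro (e | e)
      · exact A.typ.comm_tar e
      · show TG.tar (B.typ.fE e.1) = _
        rw [B.typ.comm_tar, ← tPV_i2V f g (B.gr.tar e.1)]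
        rfl }

/-- first injection into the explicit pushout -/
noncomputable def inc1 (f : THom K A) (g : THom K B) : THom A (Ptyp f g) where
  fV := Sum.inl
  fE := Sum.inl
  comm_src _ := rfl
  comm_tar _ := rfl
  typV _ := rfl
  typE _ := rfl

/-- second injection into the explicit pushout -/
noncomputable def inc2 (f : THom K A) (g : THom K B) (hg : g.Injective) :
    THom B (Ptyp f g) where
  fV := i2V f g
  fE := i2E f g
  comm_src e := by
    by_cases h : e ∈ Set.range g.fE
    · obtain ⟨k, rfl⟩ := h
      rw [i2E_g f g hg.2 k]
      show Sum.inl (A.gr.src (f.fE k)) = _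
      rw [f.comm_src, g.comm_src, i2V_g f g hg.1]
    · simp only [i2E, dif_neg h]
      rfl
  comm_tar e := by
    by_cases h : e ∈ Set.range g.fE
    · obtain ⟨k, rfl⟩ := h
      rw [i2E_g f g hg.2 k]
      show Sum.inl (A.gr.tar (f.fE k)) = _
      rw [f.comm_tar, g.comm_tar, i2V_g f g hg.1]
    · simp only [i2E, dif_neg h]
      rfl
  typV v := tPV_i2V f g v
  typE e := tPE_i2E f g e

theorem inc_comm (f : THom K A) (g : THom K B) (hg : g.Injective) :
    (inc1 f g).comp f = (inc2 f g hg).comp g := by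
  refine THom.ext' (funext fun k => ?_) (funext fun k => ?_)
  · exact (i2V_g f g hg.1 k).symm
  · exact (i2E_g f g hg.2 k).symm

theorem psiV_i2V (f : THom K A) (g : THom K B) (ia : THom A C) (ib : THom B C)
    (hsq : ia.comp f = ib.comp g) (v : B.gr.V) :
    Sum.elim ia.fV (fun y : {y : B.gr.V // y ∉ Set.range g.fV} => ib.fV y.1)
      (i2V f g v) = ib.fV v := by
  by_cases h : v ∈ Set.range g.fV
  · simp only [i2V, dif_pos h, Sum.elim_inl]
    have := THom.congr_fV hsq h.choose
    simp only [THom.comp] at this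
    exact this.trans (congrArg ib.fV h.choose_spec)
  · simp only [i2V, dif_neg h, Sum.elim_inr]

theorem psiE_i2E (f : THom K A) (g : THom K B) (ia : THom A C) (ib : THom B C)
    (hsq : ia.comp f = ib.comp g) (e : B.gr.E) :
    Sum.elim ia.fE (fun y : {y : B.gr.E // y ∉ Set.range g.fE} => ib.fE y.1)
      (i2E f g e) = ib.fE e := by
  by_cases h : e ∈ Set.range g.fE
  · simp only [i2E, dif_pos h, Sum.elim_inl]
    have := THom.congr_fE hsq h.choose
    simp only [THom.comp] at this
    exact this.trans (congrArg ib.fE h.choose_spec)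
  · simp only [i2E, dif_neg h, Sum.elim_inr]

/-- mediating morphism out of the explicit pushout -/
noncomputable def psi (f : THom K A) (g : THom K B) (ia : THom A C) (ib : THom B C)
    (hsq : ia.comp f = ib.comp g) : THom (Ptyp f g) C where
  fV := Sum.elim ia.fV (fun y => ib.fV y.1)
  fE := Sum.elim ia.fE (fun y => ib.fE y.1)
  comm_src := by
    rintro (e | e)
    · exact ia.comm_src e
    · show C.gr.src (ib.fE e.1) = _
      rw [ib.comm_src, ← psiV_i2V f g ia ib hsq (B.gr.src e.1)]
      rfl
  comm_tar := by
    rintro (e | e)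
    · exact ia.comm_tar e
    · show C.gr.tar (ib.fE e.1) = _
      rw [ib.comm_tar, ← psiV_i2V f g ia ib hsq (B.gr.tar e.1)]
      rfl
  typV := by
    rintro (v | v)
    · exact ia.typV v
    · exact ib.typV v.1
  typE := by
    rintro (e | e)
    · exact ia.typE e
    · exact ib.typE e.1

/-- Key structural facts about an abstract pushout square of typed graphs
with `g` injective: `ia, ib` are jointly surjective, and the square is a
pullback. -/
theorem po_facts (f : THom K A) (g : THom K B) (ia : THom A C) (ib : THom B C)
    (hg : g.Injective) (hpo : IsPO f g ia ib) :
    (∀ z : C.gr.V, (∃ x, ia.fV x = z) ∨ (∃ y, ib.fV y = z)) ∧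
    (∀ z : C.gr.E, (∃ x, ia.fE x = z) ∨ (∃ y, ib.fE y = z)) ∧
    (∀ x y, ia.fV x = ib.fV y → ∃ k, f.fV k = x ∧ g.fV k = y) ∧
    (∀ x y, ia.fE x = ib.fE y → ∃ k, f.fE k = x ∧ g.fE k = y) := by
  obtain ⟨h, ⟨ha, hb⟩, _⟩ := hpo.2 (Ptyp f g) (inc1 f g) (inc2 f g hg) (inc_comm f g hg)
  set ψ := psi f g ia ib hpo.1 with hψdef
  have hψa : ψ.comp (inc1 f g) = ia := THom.ext' rfl rfl
  have hψb : ψ.comp (inc2 f g hg) = ib := by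
    refine THom.ext' (funext fun v => ?_) (funext fun e => ?_)
    · exact psiV_i2V f g ia ib hpo.1 v
    · exact psiE_i2E f g ia ib hpo.1 e
  obtain ⟨h0, _, huniq⟩ := hpo.2 C ia ib hpo.1
  have h1 : ψ.comp h = THom.id C := by
    have e1 : ψ.comp h = h0 := huniq _ ⟨by rw [THom.comp_assoc, ha, hψa],
      by rw [THom.comp_assoc, hb, hψb]⟩
    have e2 : THom.id C = h0 := huniq _ ⟨THom.id_comp ia, THom.id_comp ib⟩
    rw [e1, e2]
  have haV : ∀ x, h.fV (ia.fV x) = Sum.inl x := fun x => THom.congr_fV ha x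
  have haE : ∀ x, h.fE (ia.fE x) = Sum.inl x := fun x => THom.congr_fE ha x
  have hbV : ∀ y, h.fV (ib.fV y) = i2V f g y := fun y => THom.congr_fV hb y
  have hbE : ∀ y, h.fE (ib.fE y) = i2E f g y := fun y => THom.congr_fE hb y
  refine ⟨fun z => ?_, fun z => ?_, fun x y hxy => ?_, fun x y hxy => ?_⟩
  · have hz : ψ.fV (h.fV z) = z := THom.congr_fV h1 z
    rcases hw : h.fV z with x | y
    · exact Or.inl ⟨x, by rw [← hz, hw]; rfl⟩
    · exact Or.inr ⟨y.1, by rw [← hz, hw]; rfl⟩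
  · have hz : ψ.fE (h.fE z) = z := THom.congr_fE h1 z
    rcases hw : h.fE z with x | y
    · exact Or.inl ⟨x, by rw [← hz, hw]; rfl⟩
    · exact Or.inr ⟨y.1, by rw [← hz, hw]; rfl⟩
  · have : Sum.inl x = i2V f g y := by rw [← haV x, hxy, hbV y]
    by_cases hy : y ∈ Set.range g.fV
    · rw [i2V, dif_pos hy] at this
      exact ⟨hy.choose, (Sum.inl.inj this).symm, hy.choose_spec⟩
    · rw [i2V, dif_neg hy] at this
      exact absurd this (by simp)
  · have : Sum.inl x = i2E f g y := by rw [← haE x, hxy, hbE y]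
    by_cases hy : y ∈ Set.range g.fE
    · rw [i2E, dif_pos hy] at this
      exact ⟨hy.choose, (Sum.inl.inj this).symm, hy.choose_spec⟩
    · rw [i2E, dif_neg hy] at this
      exact absurd this (by simp)

end PushoutFacts
/-- **Lemma (Guaranteeing applicability).**
Let `(ρ_b, ρ_g, ι)` be an effect-oriented rule, `m_b : L_b → G` a pre-match
for its base rule, and `e_1 : L_i′ → G`, `e_2 : K_c → G` left and right
extension matches for an induced rule `ρ_c` (i.e. injective with
`e_1 ∘ ι_L^{i′} = m_b` and `e_2 ∘ ι_K^{m} = m_b ∘ l_b`). Then the induced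
unique morphism `m_c : L_c → G` is injective and satisfies the dangling
condition for `ρ_c` if and only if (i) `e_1` and `e_2` only identify
elements stemming from `K_b`, and (ii) `e_1` satisfies the dangling
condition for the morphism `k_1`. -/
theorem guaranteeing_applicability {TG : Gra} (ρ : EORule TG)
    (c : InducedRule ρ) (G : TGraph TG)
    (mb : THom ρ.Lb G) (hmb_inj : mb.Injective) (hmb_ac : ρ.acb G mb)
    (e1 : THom c.Li G) (e2 : THom c.Kc G)
    (he1_inj : e1.Injective) (he1 : e1.comp c.ιLi = mb)
    (he2_inj : e2.Injective) (he2 : e2.comp c.ιKm = mb.comp ρ.lb)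
    (mc : THom c.Lc G) (hmc1 : mc.comp c.u = e1) (hmc2 : mc.comp c.lc = e2) :
    (mc.Injective ∧ Dangling c.rule mc) ↔
      ((∀ (x : c.Li.gr.V ⊕ c.Li.gr.E) (y : c.Kc.gr.V ⊕ c.Kc.gr.E),
          e1.elem x = e2.elem y →
          ∃ k : ρ.K.gr.V ⊕ ρ.K.gr.E, c.k1.elem k = x ∧ c.ιKm.elem k = y) ∧
       (∀ v : c.Li.gr.V,
          (∃ e : G.gr.E, e ∉ Set.range e1.fE ∧
            (G.gr.src e = e1.fV v ∨ G.gr.tar e = e1.fV v)) →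
          ∃ k : ρ.K.gr.V, c.k1.fV k = v)) := by
  obtain ⟨sV, sE, bV, bE⟩ := po_facts (c.ιLi.comp ρ.lb) c.ιKm c.u c.lc c.ιKm_inj c.po
  have hcommV : ∀ k, c.u.fV (c.k1.fV k) = c.lc.fV (c.ιKm.fV k) :=
    fun k => THom.congr_fV c.po.1 k
  have hcommE : ∀ k, c.u.fE (c.k1.fE k) = c.lc.fE (c.ιKm.fE k) :=
    fun k => THom.congr_fE c.po.1 k
  have hmuV : ∀ x, mc.fV (c.u.fV x) = e1.fV x := fun x => THom.congr_fV hmc1 x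
  have hmuE : ∀ x, mc.fE (c.u.fE x) = e1.fE x := fun x => THom.congr_fE hmc1 x
  have hmlV : ∀ y, mc.fV (c.lc.fV y) = e2.fV y := fun y => THom.congr_fV hmc2 y
  have hmlE : ∀ y, mc.fE (c.lc.fE y) = e2.fE y := fun y => THom.congr_fE hmc2 y
  constructor
  · rintro ⟨hinj, hdang⟩
    have keyV : ∀ xv yv, e1.fV xv = e2.fV yv →
        ∃ k, c.k1.fV k = xv ∧ c.ιKm.fV k = yv := by
      intro xv yv hxy
      exact bV xv yv (hinj.1 (by rw [hmuV, hmlV, hxy]))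
    have keyE : ∀ xe ye, e1.fE xe = e2.fE ye →
        ∃ k, c.k1.fE k = xe ∧ c.ιKm.fE k = ye := by
      intro xe ye hxy
      exact bE xe ye (hinj.2 (by rw [hmuE, hmlE, hxy]))
    refine ⟨?_, ?_⟩
    · rintro (xv | xe) (yv | ye) hxy
      · obtain ⟨k, hk1, hk2⟩ := keyV xv yv (Sum.inl.inj hxy)
        exact ⟨Sum.inl k, by simp [THom.elem, hk1], by simp [THom.elem, hk2]⟩
      · exact absurd hxy (by simp [THom.elem])
      · exact absurd hxy (by simp [THom.elem])
      · obtain ⟨k, hk1, hk2⟩ := keyE xe ye (Sum.inr.inj hxy)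
        exact ⟨Sum.inr k, by simp [THom.elem, hk1], by simp [THom.elem, hk2]⟩
    · rintro v ⟨e, hnr, hincid⟩
      by_cases hv : ∃ y, c.lc.fV y = c.u.fV v
      · obtain ⟨y, hy⟩ := hv
        obtain ⟨k, hk1, _⟩ := bV v y hy.symm
        exact ⟨k, hk1⟩
      · obtain ⟨e', he'⟩ := hdang (c.u.fV v) (fun y h => hv ⟨y, h⟩) e
          (by rw [hmuV v]; exact hincid)
        rcases sE e' with ⟨x, hx⟩ | ⟨y, hy⟩
        · refine absurd (⟨x, ?_⟩ : e ∈ Set.range e1.fE) hnr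
          rw [← hmuE, hx, he']
        · have hee2 : e2.fE y = e := by rw [← hmlE, hy, he']
          rcases hincid with hsrc | htar
          · have : e1.fV v = e2.fV (c.Kc.gr.src y) := by
              rw [← hsrc, ← hee2, e2.comm_src]
            obtain ⟨k, hk1, _⟩ := keyV _ _ this
            exact ⟨k, hk1⟩
          · have : e1.fV v = e2.fV (c.Kc.gr.tar y) := by
              rw [← htar, ← hee2, e2.comm_tar]
            obtain ⟨k, hk1, _⟩ := keyV _ _ this
            exact ⟨k, hk1⟩
  · rintro ⟨hi, hii⟩
    have keyV : ∀ xv yv, e1.fV xv = e2.fV yv →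
        ∃ k, c.k1.fV k = xv ∧ c.ιKm.fV k = yv := by
      intro xv yv hxy
      obtain ⟨k, h1, h2⟩ := hi (Sum.inl xv) (Sum.inl yv) (by simp [THom.elem, hxy])
      rcases k with k | k
      · exact ⟨k, Sum.inl.inj (h1 : Sum.inl (c.k1.fV k) = Sum.inl xv),
          Sum.inl.inj (h2 : Sum.inl (c.ιKm.fV k) = Sum.inl yv)⟩
      · exact absurd h1 (by simp [THom.elem])
    have keyE : ∀ xe ye, e1.fE xe = e2.fE ye →
        ∃ k, c.k1.fE k = xe ∧ c.ιKm.fE k = ye := by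
      intro xe ye hxy
      obtain ⟨k, h1, h2⟩ := hi (Sum.inr xe) (Sum.inr ye) (by simp [THom.elem, hxy])
      rcases k with k | k
      · exact absurd h1 (by simp [THom.elem])
      · exact ⟨k, Sum.inr.inj (h1 : Sum.inr (c.k1.fE k) = Sum.inr xe),
          Sum.inr.inj (h2 : Sum.inr (c.ιKm.fE k) = Sum.inr ye)⟩
    refine ⟨⟨?_, ?_⟩, ?_⟩
    · intro a b hab
      rcases sV a with ⟨x, rfl⟩ | ⟨y, rfl⟩ <;> rcases sV b with ⟨x', rfl⟩ | ⟨y', rfl⟩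
      · exact congrArg c.u.fV (he1_inj.1 (by rw [← hmuV, ← hmuV, hab]))
      · obtain ⟨k, hk1, hk2⟩ := keyV x y' (by rw [← hmuV, ← hmlV, hab])
        rw [← hk1, ← hk2]; exact hcommV k
      · obtain ⟨k, hk1, hk2⟩ := keyV x' y (by rw [← hmuV, ← hmlV, hab.symm])
        rw [← hk1, ← hk2]; exact (hcommV k).symm
      · exact congrArg c.lc.fV (he2_inj.1 (by rw [← hmlV, ← hmlV, hab]))
    · intro a b hab
      rcases sE a with ⟨x, rfl⟩ | ⟨y, rfl⟩ <;> rcases sE b with ⟨x', rfl⟩ | ⟨y', rfl⟩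
      · exact congrArg c.u.fE (he1_inj.2 (by rw [← hmuE, ← hmuE, hab]))
      · obtain ⟨k, hk1, hk2⟩ := keyE x y' (by rw [← hmuE, ← hmlE, hab])
        rw [← hk1, ← hk2]; exact hcommE k
      · obtain ⟨k, hk1, hk2⟩ := keyE x' y (by rw [← hmuE, ← hmlE, hab.symm])
        rw [← hk1, ← hk2]; exact (hcommE k).symm
      · exact congrArg c.lc.fE (he2_inj.2 (by rw [← hmlE, ← hmlE, hab]))
    · intro v' hv' e hincid
      rcases sV v' with ⟨x, rfl⟩ | ⟨y, rfl⟩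
      · by_cases he : e ∈ Set.range e1.fE
        · obtain ⟨ee, hee⟩ := he
          exact ⟨c.u.fE ee, by rw [hmuE, hee]⟩
        · obtain ⟨k, hk⟩ := hii x ⟨e, he, by rw [← hmuV x]; exact hincid⟩
          exact absurd ((hcommV k).symm.trans (congrArg c.u.fV hk))
            (hv' (c.ιKm.fV k))
      · exact (hv' y rfl).elim
end
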